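/- The weak-head strategy for dβ-reduction is deterministic: any λJ-term has at most one weak-head reduct. -/
import Mathlib


/-- λJ-terms: t ::= x | λx.t | t(u, y.r) (generalized application, y bound in r). -/
inductive Tm : Type
  | var : ℕ → Tm
  | lam : ℕ → Tm → Tm
  | gapp : Tm → Tm → ℕ → Tm → Tm
  deriving DecidableEq

namespace Tm

/-- Free variables. -/
def fv : Tm → Finset ℕ
  | var x => {x}
  | lam x t => fv t \ {x}
  | gapp t u y r => fv t ∪ fv u ∪ (fv r \ {y})

/-- Substitution [u/x]t (under the Barendregt convention). -/
def sub (u : Tm) (x : ℕ) : Tm → Tm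
  | var y => if y = x then u else var y
  | lam y t => if y = x then lam y t else lam y (sub u x t)
  | gapp t u' y r =>
      gapp (sub u x t) (sub u x u') y (if y = x then r else sub u x r)

end Tm

/-- Distant contexts D ::= ◇ | t(u, y.D). -/
inductive DCtx : Type
  | hole : DCtx
  | gapp : Tm → Tm → ℕ → DCtx → DCtx

/-- Plugging a term into a distant context. -/
def DCtx.fill : DCtx → Tm → Tm
  | .hole, t => t
  | .gapp s u y D, t => Tm.gapp s u y (D.fill t)

/-- A term has abstraction shape iff it is D⟨λx.s⟩. -/
def AbsShape (t : Tm) : Prop := ∃ D x s, t = DCtx.fill D (Tm.lam x s)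

/-- dβ-reduction: D⟨λx.t⟩(u, y.r) → [[u/x](D⟨t⟩)/y]r, closed under all contexts. -/
inductive Dbeta : Tm → Tm → Prop
  | root (D : DCtx) (x : ℕ) (t u : Tm) (y : ℕ) (r : Tm) :
      Dbeta (Tm.gapp (D.fill (Tm.lam x t)) u y r)
            (Tm.sub (Tm.sub u x (D.fill t)) y r)
  | lam (x : ℕ) {t t' : Tm} : Dbeta t t' → Dbeta (Tm.lam x t) (Tm.lam x t')
  | gapp₁ {t t'} (u : Tm) (y : ℕ) (r : Tm) :
      Dbeta t t' → Dbeta (Tm.gapp t u y r) (Tm.gapp t' u y r)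
  | gapp₂ (t : Tm) {u u'} (y : ℕ) (r : Tm) :
      Dbeta u u' → Dbeta (Tm.gapp t u y r) (Tm.gapp t u' y r)
  | gapp₃ (t u : Tm) (y : ℕ) {r r'} :
      Dbeta r r' → Dbeta (Tm.gapp t u y r) (Tm.gapp t u y r')

/-- Strong normalization of a term w.r.t. a reduction relation. -/
def SNOf (R : Tm → Tm → Prop) (t : Tm) : Prop := Acc (fun a b => R b a) t

/-- dβ-normal form. -/
def DbetaNF (t : Tm) : Prop := ∀ t', ¬ Dbeta t t'

mutual
  /-- Grammar 𝚖_var ::= x | 𝚖_var(𝚖, y.𝚖_var). -/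
  inductive Mvar : Tm → Prop
    | var (x : ℕ) : Mvar (.var x)
    | gapp {t u r : Tm} (y : ℕ) : Mvar t → Mnf u → Mvar r → Mvar (.gapp t u y r)
  /-- Grammar 𝚖 ::= x | λx.𝚖 | 𝚖_var(𝚖, y.𝚖). -/
  inductive Mnf : Tm → Prop
    | var (x : ℕ) : Mnf (.var x)
    | lam (x : ℕ) {t : Tm} : Mnf t → Mnf (.lam x t)
    | gapp {t u r : Tm} (y : ℕ) : Mvar t → Mnf u → Mnf r → Mnf (.gapp t u y r)
end

/-- Neutral terms 𝚗 ::= x | 𝚗(u, y.𝚗). -/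
inductive Neutral : Tm → Prop
  | var (x : ℕ) : Neutral (.var x)
  | gapp {t r : Tm} (u : Tm) (y : ℕ) : Neutral t → Neutral r → Neutral (.gapp t u y r)

/-- Answers 𝚊 ::= λx.t | 𝚗(u, y.𝚊). -/
inductive Answer : Tm → Prop
  | lam (x : ℕ) (t : Tm) : Answer (.lam x t)
  | gapp {t r : Tm} (u : Tm) (y : ℕ) : Neutral t → Answer r → Answer (.gapp t u y r)

/-- D_n : distant contexts whose left components are neutral. -/
def DCtx.NeutralLeft : DCtx → Prop
  | .hole => True
  | .gapp s _ _ D => Neutral s ∧ D.NeutralLeft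

/-- Weak-head contexts W ::= ◇ | W(u, y.r) | 𝚗(u, y.W). -/
inductive WCtx : Type
  | hole : WCtx
  | appL : WCtx → Tm → ℕ → Tm → WCtx
  | appR : Tm → Tm → ℕ → WCtx → WCtx

def WCtx.fill : WCtx → Tm → Tm
  | .hole, t => t
  | .appL W u y r, t => Tm.gapp (W.fill t) u y r
  | .appR n u y W, t => Tm.gapp n u y (W.fill t)

/-- Well-formedness: left components of appR must be neutral. -/
def WCtx.Wf : WCtx → Prop
  | .hole => True
  | .appL W _ _ _ => W.Wf
  | .appR n _ _ W => Neutral n ∧ W.Wf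

/-- Weak-head reduction: root dβ-rule with neutral distant context, under weak-head contexts. -/
inductive Wh : Tm → Tm → Prop
  | step (W : WCtx) (hW : W.Wf) (D : DCtx) (hD : D.NeutralLeft)
      (x : ℕ) (t u : Tm) (y : ℕ) (r : Tm) :
      Wh (W.fill (Tm.gapp (D.fill (Tm.lam x t)) u y r))
         (W.fill (Tm.sub (Tm.sub u x (D.fill t)) y r))

/-- Weak-head normal form. -/
def WhNF (t : Tm) : Prop := ∀ t', ¬ Wh t t'

/-- Inductive characterization of dβ-strong normalization. -/
inductive ISN : Tm → Prop
  | snvar (x : ℕ) : ISN (.var x)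
  | snabs {s : Tm} (x : ℕ) : ISN s → ISN (.lam x s)
  | snapp {n u r : Tm} {x : ℕ} : Neutral n → ISN n → ISN u → ISN r →
      WhNF (.gapp n u x r) → ISN (.gapp n u x r)
  | snbeta {W : WCtx} {D : DCtx} {x : ℕ} {s u : Tm} {y : ℕ} {r : Tm} :
      W.Wf → D.NeutralLeft →
      ISN (W.fill (Tm.sub (Tm.sub u x (D.fill s)) y r)) →
      ISN (D.fill s) → ISN u →
      ISN (W.fill (Tm.gapp (D.fill (Tm.lam x s)) u y r))

/-- Simple types. -/
inductive Ty : Type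
  | base : ℕ → Ty
  | arrow : Ty → Ty → Ty

/-- Simple typing for λJ. -/
inductive STyped : (ℕ → Ty) → Tm → Ty → Prop
  | var (Γ : ℕ → Ty) (x : ℕ) : STyped Γ (.var x) (Γ x)
  | abs {Γ : ℕ → Ty} {x : ℕ} {t : Tm} {τ : Ty} (σ : Ty) :
      STyped (Function.update Γ x σ) t τ → STyped Γ (.lam x t) (.arrow σ τ)
  | app {Γ : ℕ → Ty} {t u : Tm} {y : ℕ} {r : Tm} {σ τ ρ : Ty} :
      STyped Γ t (.arrow σ τ) → STyped Γ u σ →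
      STyped (Function.update Γ y τ) r ρ → STyped Γ (.gapp t u y r) ρ

/-- λ-calculus terms. -/
inductive Lm : Type
  | var : ℕ → Lm
  | lam : ℕ → Lm → Lm
  | app : Lm → Lm → Lm

/-- Substitution [u/x]M on λ-terms. -/
def Lm.sub (u : Lm) (x : ℕ) : Lm → Lm
  | .var y => if y = x then u else .var y
  | .lam y t => if y = x then .lam y t else .lam y (Lm.sub u x t)
  | .app t s => .app (Lm.sub u x t) (Lm.sub u x s)

/-- β ∪ σ₁ reduction on λ-terms. -/
inductive BetaSigma : Lm → Lm → Prop
  | beta (x : ℕ) (M N : Lm) : BetaSigma (.app (.lam x M) N) (Lm.sub N x M)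
  | sigma (x : ℕ) (M N P : Lm) :
      BetaSigma (.app (.app (.lam x M) N) P) (.app (.lam x (.app M P)) N)
  | lam (x : ℕ) {t t'} : BetaSigma t t' → BetaSigma (.lam x t) (.lam x t')
  | app₁ {t t'} (s : Lm) : BetaSigma t t' → BetaSigma (.app t s) (.app t' s)
  | app₂ (t : Lm) {s s'} : BetaSigma s s' → BetaSigma (.app t s) (.app t s')

/-- The translation (·)* of λJ into the λ-calculus. -/
def star : Tm → Lm
  | .var x => .var x
  | .lam x t => .lam x (star t)
  | .gapp t u y r => .app (.lam y (star r)) (.app (star t) (star u))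

/-- Non-idempotent intersection types: σ ::= a | M → σ with M a (multi)set of types. -/
inductive ITy : Type
  | base : ℕ → ITy
  | arrow : List ITy → ITy → ITy

/-- Typing environments: relevant maps from variables to multisets of types. -/
def IEnv : Type := ℕ → List ITy

/-- Pointwise multiset union of environments. -/
def envAdd (Γ Δ : IEnv) : IEnv := fun z => Γ z ++ Δ z

/-- Empty environment. -/
def envEmpty : IEnv := fun _ => []

/-- The choice operator: identity on nonempty multisets, arbitrary singleton on the empty one. -/
def Choice (M M' : List ITy) : Prop :=
  (M ≠ [] ∧ M' = M) ∨ (M = [] ∧ ∃ σ, M' = [σ])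

mutual
  /-- Sized typing derivations of system ∩J. -/
  inductive IDer : IEnv → Tm → ITy → ℕ → Prop
    | var (x : ℕ) (σ : ITy) :
        IDer (Function.update envEmpty x [σ]) (.var x) σ 1
    | abs {Γ : IEnv} {x : ℕ} {t : Tm} {σ : ITy} {n : ℕ} :
        IDer Γ t σ n →
        IDer (Function.update Γ x []) (.lam x t) (.arrow (Γ x) σ) (n + 1)
    | app {L : List (List ITy × ITy)} {Mt Mu : List ITy}
        {Θ Δ Λ : IEnv} {t u r : Tm} {y : ℕ} {σ : ITy} {n₁ n₂ n₃ : ℕ} :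
        Choice (L.map fun p => ITy.arrow p.1 p.2) Mt →
        Choice (L.map Prod.fst).flatten Mu →
        IDerM Θ t Mt n₁ →
        IDerM Δ u Mu n₂ →
        Λ y = [] →
        IDer (Function.update Λ y (L.map Prod.snd)) r σ n₃ →
        IDer (envAdd Θ (envAdd Δ Λ)) (.gapp t u y r) σ (1 + n₁ + n₂ + n₃)
  /-- Sized (many)-derivations: multiset conclusions. -/
  inductive IDerM : IEnv → Tm → List ITy → ℕ → Prop
    | nil (t : Tm) : IDerM envEmpty t [] 0
    | cons {Γ Δ : IEnv} {t : Tm} {σ : ITy} {M : List ITy} {n m : ℕ} :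
        IDer Γ t σ n → IDerM Δ t M m → IDerM (envAdd Γ Δ) t (σ :: M) (n + m)
end

/-- Non-erasing dβ-reduction: x ∈ fv(t) and y ∈ fv(r) for the contracted redex. -/
inductive DbetaNE : Tm → Tm → Prop
  | root (D : DCtx) {x : ℕ} {t : Tm} (u : Tm) {y : ℕ} {r : Tm} :
      x ∈ Tm.fv t → y ∈ Tm.fv r →
      DbetaNE (Tm.gapp (D.fill (Tm.lam x t)) u y r)
              (Tm.sub (Tm.sub u x (D.fill t)) y r)
  | lam (x : ℕ) {t t' : Tm} : DbetaNE t t' → DbetaNE (Tm.lam x t) (Tm.lam x t')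
  | gapp₁ {t t'} (u : Tm) (y : ℕ) (r : Tm) :
      DbetaNE t t' → DbetaNE (Tm.gapp t u y r) (Tm.gapp t' u y r)
  | gapp₂ (t : Tm) {u u'} (y : ℕ) (r : Tm) :
      DbetaNE u u' → DbetaNE (Tm.gapp t u y r) (Tm.gapp t u' y r)
  | gapp₃ (t u : Tm) (y : ℕ) {r r'} :
      DbetaNE r r' → DbetaNE (Tm.gapp t u y r) (Tm.gapp t u y r')

/-- Freshness of a variable for a distant context (capture avoidance). -/
def DCtx.Fresh : DCtx → ℕ → Prop
  | .hole, _ => True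
  | .gapp s u y D, x => x ∉ Tm.fv s ∧ x ∉ Tm.fv u ∧ x ≠ y ∧ D.Fresh x

/-- β-reduction of ΛJ: (λx.t)(u, y.r) → [[u/x]t/y]r, closed under contexts. -/
inductive JBeta : Tm → Tm → Prop
  | root (x : ℕ) (t u : Tm) (y : ℕ) (r : Tm) :
      JBeta (Tm.gapp (Tm.lam x t) u y r) (Tm.sub (Tm.sub u x t) y r)
  | lam (x : ℕ) {t t' : Tm} : JBeta t t' → JBeta (Tm.lam x t) (Tm.lam x t')
  | gapp₁ {t t'} (u : Tm) (y : ℕ) (r : Tm) :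
      JBeta t t' → JBeta (Tm.gapp t u y r) (Tm.gapp t' u y r)
  | gapp₂ (t : Tm) {u u'} (y : ℕ) (r : Tm) :
      JBeta u u' → JBeta (Tm.gapp t u y r) (Tm.gapp t u' y r)
  | gapp₃ (t u : Tm) (y : ℕ) {r r'} :
      JBeta r r' → JBeta (Tm.gapp t u y r) (Tm.gapp t u y r')

/-- π-reduction of ΛJ: t(u, x.r)(u', y.r') → t(u, x.r(u', y.r')), closed under contexts. -/
inductive JPi : Tm → Tm → Prop
  | root (t u : Tm) (x : ℕ) (r u' : Tm) (y : ℕ) (r' : Tm) :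
      JPi (Tm.gapp (Tm.gapp t u x r) u' y r') (Tm.gapp t u x (Tm.gapp r u' y r'))
  | lam (x : ℕ) {t t' : Tm} : JPi t t' → JPi (Tm.lam x t) (Tm.lam x t')
  | gapp₁ {t t'} (u : Tm) (y : ℕ) (r : Tm) :
      JPi t t' → JPi (Tm.gapp t u y r) (Tm.gapp t' u y r)
  | gapp₂ (t : Tm) {u u'} (y : ℕ) (r : Tm) :
      JPi u u' → JPi (Tm.gapp t u y r) (Tm.gapp t u' y r)
  | gapp₃ (t u : Tm) (y : ℕ) {r r'} :
      JPi r r' → JPi (Tm.gapp t u y r) (Tm.gapp t u y r')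
/-- Structural reformulation of weak-head reduction. -/
inductive Wh' : Tm → Tm → Prop
  | root (D : DCtx) (hD : D.NeutralLeft) (x : ℕ) (t u : Tm) (y : ℕ) (r : Tm) :
      Wh' (Tm.gapp (D.fill (Tm.lam x t)) u y r)
          (Tm.sub (Tm.sub u x (D.fill t)) y r)
  | appL {t t' : Tm} (u : Tm) (y : ℕ) (r : Tm) :
      Wh' t t' → Wh' (Tm.gapp t u y r) (Tm.gapp t' u y r)
  | appR {n r r' : Tm} (u : Tm) (y : ℕ) :
      Neutral n → Wh' r r' → Wh' (Tm.gapp n u y r) (Tm.gapp n u y r')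

lemma wh'_fill {a b : Tm} (h : Wh' a b) :
    ∀ W : WCtx, W.Wf → Wh' (W.fill a) (W.fill b) := by
  intro W
  induction W with
  | hole => intro _; exact h
  | appL W u y r ih => intro hW; exact Wh'.appL u y r (ih hW)
  | appR n u y W ih => intro hW; exact Wh'.appR u y hW.1 (ih hW.2)

lemma wh'_of_wh {t u : Tm} (h : Wh t u) : Wh' t u := by
  cases h with
  | step W hW D hD x t u y r => exact wh'_fill (Wh'.root D hD x t u y r) W hW

lemma fill_lam_answer {D : DCtx} (hD : D.NeutralLeft) (x : ℕ) (s : Tm) :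
    Answer (D.fill (Tm.lam x s)) := by
  induction D with
  | hole => exact Answer.lam x s
  | gapp a b y D ih => exact Answer.gapp b y hD.1 (ih hD.2)

lemma answer_not_neutral {t : Tm} (ha : Answer t) (hn : Neutral t) : False := by
  induction ha with
  | lam => cases hn
  | gapp u y _ _ ih => cases hn with | gapp _ _ _ hr => exact ih hr

lemma neutral_whnf' {t u : Tm} (h : Wh' t u) (hn : Neutral t) : False := by
  induction h with
  | root D hD x t u y r =>
      cases hn with
      | gapp _ _ ht _ => exact answer_not_neutral (fill_lam_answer hD x t) ht
  | appL u y r _ ih => cases hn with | gapp _ _ ht _ => exact ih ht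
  | appR u y _ _ ih => cases hn with | gapp _ _ _ hr => exact ih hr

lemma answer_whnf' {t u : Tm} (h : Wh' t u) (ha : Answer t) : False := by
  induction h with
  | root D hD x t u y r =>
      cases ha with
      | gapp _ _ ht _ => exact answer_not_neutral (fill_lam_answer hD x t) ht
  | appL u y r h ih =>
      cases ha with
      | gapp _ _ ht _ => exact neutral_whnf' h ht
  | appR u y _ _ ih => cases ha with | gapp _ _ _ hr => exact ih hr

lemma fill_lam_inj : ∀ (D₁ D₂ : DCtx), D₁.NeutralLeft → D₂.NeutralLeft →
    ∀ (x₁ x₂ : ℕ) (s₁ s₂ : Tm),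
    D₁.fill (Tm.lam x₁ s₁) = D₂.fill (Tm.lam x₂ s₂) →
    D₁ = D₂ ∧ x₁ = x₂ ∧ s₁ = s₂ := by
  intro D₁
  induction D₁ with
  | hole =>
      intro D₂ _ _ x₁ x₂ s₁ s₂ heq
      cases D₂ with
      | hole => simp [DCtx.fill] at heq; exact ⟨rfl, heq.1, heq.2⟩
      | gapp a b y D => simp [DCtx.fill] at heq
  | gapp a b y D ih =>
      intro D₂ h₁ h₂ x₁ x₂ s₁ s₂ heq
      cases D₂ with
      | hole => simp [DCtx.fill] at heq
      | gapp a' b' y' D' =>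
          simp [DCtx.fill] at heq
          obtain ⟨ha, hb, hy, hD⟩ := heq
          obtain ⟨hDD, hx, hs⟩ := ih D' h₁.2 h₂.2 x₁ x₂ s₁ s₂ hD
          subst ha hb hy hDD hx hs
          exact ⟨rfl, rfl, rfl⟩

lemma wh'_gapp_inv {h a : Tm} {y : ℕ} {r v : Tm}
    (H : Wh' (Tm.gapp h a y r) v) :
    (∃ D x s, DCtx.NeutralLeft D ∧ h = DCtx.fill D (Tm.lam x s) ∧
        v = Tm.sub (Tm.sub a x (DCtx.fill D s)) y r) ∨
    (∃ h', Wh' h h' ∧ v = Tm.gapp h' a y r) ∨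
    (∃ r', Neutral h ∧ Wh' r r' ∧ v = Tm.gapp h a y r') := by
  cases H with
  | root D hD x t u yy rr => exact Or.inl ⟨D, x, t, hD, rfl, rfl⟩
  | appL _ _ _ h' => exact Or.inr (Or.inl ⟨_, h', rfl⟩)
  | appR _ _ hn h' => exact Or.inr (Or.inr ⟨_, hn, h', rfl⟩)

lemma wh'_det {t u v : Tm} (h₁ : Wh' t u) : Wh' t v → u = v := by
  induction h₁ generalizing v with
  | root D hD x s a y r =>
      intro h₂
      rcases wh'_gapp_inv h₂ with ⟨D', x', s', hD', heq, hv⟩ | ⟨h', hw, hv⟩ | ⟨r', hn, hw, hv⟩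
      · obtain ⟨hDD, hx, hs⟩ := fill_lam_inj D D' hD hD' x x' s s' heq
        subst hDD hx hs hv
        rfl
      · exact absurd (fill_lam_answer hD x s) (fun ha => answer_whnf' hw ha)
      · exact absurd (fill_lam_answer hD x s) (fun ha => answer_not_neutral ha hn)
  | appL a y r h ih =>
      intro h₂
      rcases wh'_gapp_inv h₂ with ⟨D', x', s', hD', heq, hv⟩ | ⟨h', hw, hv⟩ | ⟨r', hn, hw, hv⟩
      · subst heq; exact absurd (fill_lam_answer hD' x' s') (fun ha => answer_whnf' h ha)
      · rw [hv, ih hw]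
      · exact absurd hn (fun hn => neutral_whnf' h hn)
  | appR a y hn h ih =>
      intro h₂
      rcases wh'_gapp_inv h₂ with ⟨D', x', s', hD', heq, hv⟩ | ⟨h', hw, hv⟩ | ⟨r', _, hw, hv⟩
      · subst heq; exact absurd (fill_lam_answer hD' x' s') (fun ha => answer_not_neutral ha hn)
      · exact absurd hn (fun hn => neutral_whnf' hw hn)
      · rw [hv, ih hw]

theorem wh_deterministic {t u v : Tm} (h₁ : Wh t u) (h₂ : Wh t v) : u = v :=
  wh'_det (wh'_of_wh h₁) (wh'_of_wh h₂)
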